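/- Let X be a complete separable metric space and κ : X → ℓ^∞ its Kuratowski embedding. If γ : [a,b] → κ(X) ⊆ ℓ^∞ is a non-constant Lipschitz curve, then its a.e.-defined weak* derivative γ' : [a,b] → ℓ^∞ is not essentially separably valued: for every Lebesgue-null set N ⊆ [a,b], the set γ'([a,b] \ N) is not separable in ℓ^∞. -/

import Mathlib

open MeasureTheory Set Filter Topology ENNReal

/-!
Write `γ = κ ∘ ζ`, so that the `i`-th coordinate of `γ` is `g i = dist (ζ ·) (x i)` up to a
constant. If `γ'` were essentially separably valued, then for every `ε > 0` almost every `t` would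
be a density point of a set on which all `(g i)'` are `ε`-close to one `w ∈ ℓ^∞` with
`‖γ' t - w‖ < ε`. Integrating over `[t, t + r]` and `[t - r, t]`, the increments
`g i (t ± r) - g i t` are `± r wᵢ` up to `o(r)`, uniformly in `i`. Taking `x i` close to `ζ t`
turns them into `d(ζ (t + r), ζ t) + d(ζ (t - r), ζ t) = o(r)`: the metric speed of `ζ` at `t`
vanishes, hence so do all coordinates of `w`, and `‖γ' t‖ ≤ 4ε`. So `γ' = 0` a.e., and the
Lipschitz coordinates of `γ` are constant.
-/

/-- `γ` is weak* differentiable at `t` with weak* derivative `D`, with respect to the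
duality `ℓ^∞ = (ℓ¹)*`. -/
def IsWeakStarDerivAt (γ : ℝ → lp (fun _ : ℕ => ℝ) ∞) (t : ℝ)
    (D : lp (fun _ : ℕ => ℝ) ∞) : Prop :=
  ∀ f : lp (fun _ : ℕ => ℝ) 1,
    Tendsto (fun h : ℝ =>
        ∑' i : ℕ, (f : ℕ → ℝ) i * (((γ (t + h) : ℕ → ℝ) i - (γ t : ℕ → ℝ) i) / h))
      (𝓝[≠] 0) (𝓝 (∑' i : ℕ, (f : ℕ → ℝ) i * (D : ℕ → ℝ) i))

open Metric

theorem IsWeakStarDerivAt.hasDerivAt_apply {γ : ℝ → lp (fun _ : ℕ => ℝ) ∞} {t : ℝ}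
    {D : lp (fun _ : ℕ => ℝ) ∞} (h : IsWeakStarDerivAt γ t D) (i : ℕ) :
    HasDerivAt (fun s => (γ s : ℕ → ℝ) i) ((D : ℕ → ℝ) i) t := by
  have hi := h (lp.single 1 i 1)
  simp only [lp.single_apply, Pi.single_apply, ite_mul, one_mul, zero_mul, tsum_ite_eq] at hi
  rw [hasDerivAt_iff_tendsto_slope_zero]
  simpa only [smul_eq_mul, div_eq_inv_mul] using hi

/-- Choosing `x i` close to `p`, the two hypotheses give `dist q p + dist q' p ≤ 2δ`. -/
theorem abs_le_of_dist_increments {X : Type*} [PseudoMetricSpace X] {x : ℕ → X}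
    (hx : DenseRange x) {p q q' : X} {v : ℕ → ℝ} {δ : ℝ}
    (hq : ∀ i, |dist q (x i) - dist p (x i) - v i| ≤ δ)
    (hq' : ∀ i, |dist p (x i) - dist q' (x i) - v i| ≤ δ) (j : ℕ) :
    |v j| ≤ 3 * δ := by
  have hqp : dist q p ≤ 2 * δ := by
    refine le_of_forall_pos_le_add fun η hη => ?_
    obtain ⟨i, hi⟩ := hx.exists_dist_lt p (by positivity : 0 < η / 4)
    have := dist_triangle_right q p (x i)
    have := dist_triangle_right q' p (x i)
    have := dist_nonneg (x := q') (y := p)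
    have := abs_le.1 (hq i)
    have := abs_le.1 (hq' i)
    linarith
  have hj := abs_le.1 ((abs_dist_sub_le q p (x j)).trans hqp)
  have := abs_le.1 (hq j)
  rw [abs_le]
  constructor <;> linarith

theorem abs_intervalIntegral_sub_mul_le {φ : ℝ → ℝ} {A : Set ℝ} {u v c ε L : ℝ}
    (huv : u ≤ v) (hφ : IntervalIntegrable φ volume u v) (hA : MeasurableSet A) (hε : 0 ≤ ε)
    (hAc : ∀ s ∈ A, |φ s - c| ≤ ε) (hL : ∀ s ∈ Ioc u v, |φ s - c| ≤ L) :
    |(∫ s in u..v, φ s) - (v - u) * c| ≤ ε * (v - u) + L * volume.real (Ioc u v \ A) := by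
  have hint : IntegrableOn (fun s => φ s - c) (Ioc u v) :=
    hφ.1.sub (integrableOn_const measure_Ioc_lt_top.ne)
  have hsplit : (∫ s in u..v, φ s) - (v - u) * c
      = (∫ s in Ioc u v ∩ A, (φ s - c)) + ∫ s in Ioc u v \ A, (φ s - c) := by
    rw [integral_inter_add_sdiff hA hint,
      integral_sub hφ.1 (integrableOn_const measure_Ioc_lt_top.ne), setIntegral_const,
      Real.volume_real_Ioc_of_le huv, smul_eq_mul,
      intervalIntegral.integral_of_le huv]
  have hA_part : |∫ s in Ioc u v ∩ A, (φ s - c)| ≤ ε * (v - u) := by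
    calc |∫ s in Ioc u v ∩ A, (φ s - c)| ≤ ε * volume.real (Ioc u v ∩ A) :=
          norm_setIntegral_le_of_norm_le_const
            ((measure_mono inter_subset_left).trans_lt measure_Ioc_lt_top)
            fun s (hs : s ∈ Ioc u v ∩ A) => (Real.norm_eq_abs _).trans_le (hAc s hs.2)
      _ ≤ ε * volume.real (Ioc u v) := by
        gcongr
        exacts [measure_Ioc_lt_top.ne, inter_subset_left]
      _ = ε * (v - u) := by rw [Real.volume_real_Ioc_of_le huv]
  have hcompl_part : |∫ s in Ioc u v \ A, (φ s - c)| ≤ L * volume.real (Ioc u v \ A) :=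
    norm_setIntegral_le_of_norm_le_const
      ((measure_mono sdiff_subset).trans_lt measure_Ioc_lt_top)
      fun s (hs : s ∈ Ioc u v \ A) => (Real.norm_eq_abs _).trans_le (hL s hs.1)
  rw [hsplit]
  exact (abs_add_le _ _).trans (add_le_add hA_part hcompl_part)

theorem LipschitzOnWith.abs_sub_sub_mul_le {f : ℝ → ℝ} {K : NNReal} {U A : Set ℝ}
    {u v c ε : ℝ} (hf : LipschitzOnWith K f U) (hU : IsOpen U) (huv : u ≤ v)
    (hIcc : Icc u v ⊆ U) (hA : MeasurableSet A) (hε : 0 ≤ ε)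
    (hAc : ∀ s ∈ A, |deriv f s - c| ≤ ε) :
    |f v - f u - (v - u) * c| ≤ ε * (v - u) + (K + |c|) * volume.real (Ioc u v \ A) := by
  have hac : AbsolutelyContinuousOnInterval f u v :=
    (hf.mono (by rwa [uIcc_of_le huv])).absolutelyContinuousOnInterval
  rw [← hac.integral_deriv_eq_sub]
  refine abs_intervalIntegral_sub_mul_le huv hac.intervalIntegrable_deriv hA hε hAc
    fun s hs => ?_
  calc |deriv f s - c| ≤ |deriv f s| + |c| := abs_sub _ _
    _ ≤ K + |c| := by
      gcongr
      exact norm_deriv_le_of_lipschitzOn (hU.mem_nhds (hIcc (Ioc_subset_Icc_self hs))) hf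

theorem ae_eventually_volume_closedBall_sdiff_le {A : Set ℝ} (hA : MeasurableSet A) :
    ∀ᵐ t, t ∈ A → ∀ d > 0, ∀ᶠ r in 𝓝[>] 0,
      volume.real (closedBall t r \ A) ≤ d * r := by
  filter_upwards [Besicovitch.ae_tendsto_measure_inter_div_of_measurableSet volume hA.compl]
    with t ht htA d hd
  rw [indicator_of_notMem (not_not.2 htA)] at ht
  filter_upwards [ht.eventually (gt_mem_nhds (ofReal_pos.2 (half_pos hd))), self_mem_nhdsWithin]
    with r hr (hr0 : 0 < r)
  rw [Real.volume_closedBall,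
    ENNReal.div_lt_iff (.inl (by simpa using hr0)) (.inl ofReal_ne_top),
    ← ofReal_mul (by positivity), inter_comm, ← sdiff_eq] at hr
  refine toReal_le_of_le_ofReal (by positivity) (hr.le.trans_eq ?_)
  congr 1
  ring

theorem measurableSet_setOf_forall_abs_deriv_sub_le (g : ℕ → ℝ → ℝ) (w : ℕ → ℝ)
    (ε : ℝ) :
    MeasurableSet {s | ∀ i, |deriv (g i) s - w i| ≤ ε} := by
  simp only [ofPred_forall]
  exact .iInter fun i => measurableSet_le ((measurable_deriv _).sub measurable_const).abs
    measurable_const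

theorem LipschitzOnWith.eq_of_ae_hasDerivAt_apply_zero {ι : Type*}
    {γ : ℝ → lp (fun _ : ι => ℝ) ∞} {K : NNReal} {a b : ℝ}
    (hLip : LipschitzOnWith K γ (Icc a b))
    (h0 : ∀ᵐ t ∂volume.restrict (Icc a b), ∀ i,
      HasDerivAt (fun s => (γ s : ι → ℝ) i) 0 t)
    {s t : ℝ} (hs : s ∈ Icc a b) (ht : t ∈ Icc a b) : γ s = γ t := by
  have hIcc : uIcc a b = Icc a b := uIcc_of_le (hs.1.trans hs.2)
  refine lp.ext (funext fun i => ?_)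
  obtain ⟨C, hC⟩ := ((LipschitzOnWith.coordinate γ _ K).1 hLip i).mono hIcc.subset
    |>.absolutelyContinuousOnInterval.const_of_ae_hasDerivAt_zero (by
      rw [hIcc]
      filter_upwards [(ae_restrict_iff' measurableSet_Icc).1 h0] with t ht hmem using ht hmem i)
  exact (hC s (hIcc ▸ hs)).trans (hC t (hIcc ▸ ht)).symm

section KuratowskiCurve

variable {X : Type*} [PseudoMetricSpace X] {x : ℕ → X} {ζ : ℝ → X} {U : Set ℝ}
  {g : ℕ → ℝ → ℝ} {c : ℕ → ℝ} {K : NNReal} {D : ℝ → lp (fun _ : ℕ => ℝ) ∞}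
  {S : Set (lp (fun _ : ℕ => ℝ) ∞)}

theorem abs_le_of_eventually_volume_closedBall_sdiff_le (hx : DenseRange x) (hU : IsOpen U)
    (hg : ∀ s ∈ U, ∀ i, g i s = dist (ζ s) (x i) + c i)
    (hLip : ∀ i, LipschitzOnWith K (g i) U) {w : ℕ → ℝ} {M : ℝ}
    (hw : ∀ i, |w i| ≤ M) {ε : ℝ} (hε : 0 ≤ ε) {t : ℝ} (ht : t ∈ U)
    (hdens : ∀ d > 0, ∀ᶠ r in 𝓝[>] 0,
      volume.real (closedBall t r \ {s | ∀ i, |deriv (g i) s - w i| ≤ ε}) ≤ d * r)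
    (j : ℕ) : |w j| ≤ 3 * ε := by
  set A := {s | ∀ i, |deriv (g i) s - w i| ≤ ε}
  have hA : MeasurableSet A := measurableSet_setOf_forall_abs_deriv_sub_le g w ε
  have hM : 0 ≤ M := (abs_nonneg _).trans (hw 0)
  refine le_of_forall_pos_le_add fun η hη => ?_
  set d := η / (3 * (K + M + 1)) with hd
  have hd0 : 0 < d := by positivity
  obtain ⟨r, hr0, hrU, hrA⟩ : ∃ r : ℝ, 0 < r ∧ closedBall t r ⊆ U ∧
      volume.real (closedBall t r \ A) ≤ d * r :=
    (eventually_mem_nhdsWithin.and (((eventually_closedBall_subset (hU.mem_nhds ht)).filter_mono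
      nhdsWithin_le_nhds).and (hdens d hd0))).exists
  rw [Real.closedBall_eq_Icc] at hrU hrA
  have hinc : ∀ u, Icc u (u + r) ⊆ Icc (t - r) (t + r) → ∀ i,
      |g i (u + r) - g i u - r * w i| ≤ ε * r + (K + M) * (d * r) := by
    intro u hu i
    have := (hLip i).abs_sub_sub_mul_le hU (by linarith) (hu.trans hrU) hA hε
      fun s hs => hs i
    rw [add_sub_cancel_left] at this
    refine this.trans (add_le_add_right ?_ _)
    have hvol : volume.real (Ioc u (u + r) \ A) ≤ d * r :=
      (measureReal_mono (sdiff_subset_sdiff_left (Ioc_subset_Icc_self.trans hu))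
        (measure_Icc_lt_top.trans_le' (measure_mono sdiff_subset)).ne).trans hrA
    gcongr
    exact hw i
  have hdist : ∀ {s s'}, s ∈ Icc (t - r) (t + r) → s' ∈ Icc (t - r) (t + r) → ∀ i,
      g i s - g i s' = dist (ζ s) (x i) - dist (ζ s') (x i) := by
    intro s s' hs hs' i
    rw [hg s (hrU hs), hg s' (hrU hs')]
    ring
  have h₀ : t ∈ Icc (t - r) (t + r) := ⟨by linarith, by linarith⟩
  have h₁ : t + r ∈ Icc (t - r) (t + r) := ⟨by linarith, le_rfl⟩
  have h₂ : t - r ∈ Icc (t - r) (t + r) := ⟨le_rfl, by linarith⟩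
  have key := abs_le_of_dist_increments hx (p := ζ t) (q := ζ (t + r)) (q' := ζ (t - r))
    (v := fun i => r * w i)
    (fun i => by
      rw [← hdist h₁ h₀]
      exact hinc t (Icc_subset_Icc (by linarith) le_rfl) i)
    (fun i => by
      rw [← hdist h₀ h₂]
      simpa using hinc (t - r) (Icc_subset_Icc le_rfl (by linarith)) i) j
  rw [abs_mul, abs_of_pos hr0] at key
  have hKMd : 3 * ((K + M) * d) ≤ η := by
    rw [hd, ← mul_div_assoc, mul_div_assoc', div_le_iff₀ (by positivity)]
    nlinarith
  nlinarith

theorem ae_abs_apply_le_of_isSeparable (hx : DenseRange x) (hU : IsOpen U)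
    (hg : ∀ s ∈ U, ∀ i, g i s = dist (ζ s) (x i) + c i)
    (hLip : ∀ i, LipschitzOnWith K (g i) U)
    (hD : ∀ᵐ t ∂volume.restrict U, ∀ i, deriv (g i) t = D t i)
    (hS : TopologicalSpace.IsSeparable S)
    (hDS : ∀ᵐ t ∂volume.restrict U, D t ∈ S) {ε : ℝ} (hε : 0 < ε) :
    ∀ᵐ t ∂volume.restrict U, ∀ j, |D t j| ≤ 4 * ε := by
  obtain ⟨C, hC, hSC⟩ := hS
  have hdens := (ae_ball_iff hC).2 fun w (_ : w ∈ C) =>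
    ae_eventually_volume_closedBall_sdiff_le (measurableSet_setOf_forall_abs_deriv_sub_le g w ε)
  filter_upwards [hD, hDS, ae_restrict_mem hU.measurableSet, ae_restrict_of_ae hdens]
    with t hDt hSt htU hdt j
  obtain ⟨w, hwC, hDw⟩ := Metric.mem_closure_iff.1 (hSC hSt) ε hε
  have hcoord : ∀ i, |D t i - w i| ≤ ε := fun i =>
    ((lp.lipschitzWith_one_eval ∞ i).dist_le_mul (D t) w).trans
      (by rw [NNReal.coe_one, one_mul]; exact hDw.le)
  have hwj := abs_le_of_eventually_volume_closedBall_sdiff_le hx hU hg hLip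
    (fun i => (Real.norm_eq_abs _).symm.trans_le (lp.norm_apply_le_norm top_ne_zero w i))
    hε.le htU (hdt w hwC fun i => by rw [hDt i]; exact hcoord i) j
  linarith [abs_sub_abs_le_abs_sub (D t j) (w j), hcoord j]

theorem ae_eq_zero_of_isSeparable (hx : DenseRange x) (hU : IsOpen U)
    (hg : ∀ s ∈ U, ∀ i, g i s = dist (ζ s) (x i) + c i)
    (hLip : ∀ i, LipschitzOnWith K (g i) U)
    (hD : ∀ᵐ t ∂volume.restrict U, ∀ i, deriv (g i) t = D t i)
    (hS : TopologicalSpace.IsSeparable S)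
    (hDS : ∀ᵐ t ∂volume.restrict U, D t ∈ S) :
    ∀ᵐ t ∂volume.restrict U, D t = 0 := by
  have h := ae_all_iff.2 fun n : ℕ =>
    ae_abs_apply_le_of_isSeparable hx hU hg hLip hD hS hDS (ε := 1 / (n + 1)) (by positivity)
  filter_upwards [h] with t ht
  refine lp.ext (funext fun j => abs_nonpos_iff.1 ?_)
  have hlim : Tendsto (fun n : ℕ => 4 * (1 / ((n : ℝ) + 1))) atTop (𝓝 0) := by
    simpa using tendsto_one_div_add_atTop_nhds_zero_nat.const_mul (4 : ℝ)
  exact ge_of_tendsto' hlim fun n => ht n j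

end KuratowskiCurve

theorem stmt15_general {X : Type*} [MetricSpace X]
    (x : ℕ → X) (hx : DenseRange x)
    (κ : X → lp (fun _ : ℕ => ℝ) ∞)
    (hκ : ∀ (z : X) (i : ℕ), (κ z : ℕ → ℝ) i = dist z (x i) - dist (x i) (x 0))
    (a b : ℝ) (K : NNReal)
    (γ : ℝ → lp (fun _ : ℕ => ℝ) ∞)
    (hrange : ∀ t ∈ Set.Icc a b, γ t ∈ Set.range κ)
    (hLip : LipschitzOnWith K γ (Set.Icc a b))
    (hnonconst : ∃ s ∈ Set.Icc a b, ∃ t ∈ Set.Icc a b, γ s ≠ γ t)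
    (γ' : ℝ → lp (fun _ : ℕ => ℝ) ∞)
    (hdiff : ∀ᵐ t ∂(volume.restrict (Set.Icc a b)), IsWeakStarDerivAt γ t (γ' t)) :
    ∀ N : Set ℝ, volume N = 0 →
      ¬ TopologicalSpace.IsSeparable (γ' '' (Set.Icc a b \ N)) := by
  intro N hN hsep
  obtain ⟨s₀, hs₀, t₀, ht₀, hne⟩ := hnonconst
  have : Nonempty X := ⟨x 0⟩
  choose! ζ hζ using hrange
  set g : ℕ → ℝ → ℝ := fun i t => (γ t : ℕ → ℝ) i
  have hgLip : ∀ i, LipschitzOnWith K (g i) (Ioo a b) := fun i =>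
    ((LipschitzOnWith.coordinate γ _ K).1 hLip i).mono Ioo_subset_Icc_self
  have hg : ∀ s ∈ Ioo a b, ∀ i, g i s = dist (ζ s) (x i) + -dist (x i) (x 0) := by
    intro s hs i
    show (γ s : ℕ → ℝ) i = _
    rw [← hζ s (Ioo_subset_Icc_self hs), hκ, sub_eq_add_neg]
  have hderiv : ∀ᵐ t ∂volume.restrict (Ioo a b), ∀ i, HasDerivAt (g i) (γ' t i) t := by
    rw [restrict_Ioo_eq_restrict_Icc]
    filter_upwards [hdiff] with t ht i using ht.hasDerivAt_apply i
  have hzero : ∀ᵐ t ∂volume.restrict (Ioo a b), γ' t = 0 := by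
    refine ae_eq_zero_of_isSeparable hx isOpen_Ioo hg hgLip
      (hderiv.mono fun t ht i => (ht i).deriv) hsep ?_
    filter_upwards [ae_restrict_mem measurableSet_Ioo,
      ae_restrict_of_ae (measure_eq_zero_iff_ae_notMem.1 hN)] with t ht htN
      using ⟨t, ⟨Ioo_subset_Icc_self ht, htN⟩, rfl⟩
  rw [restrict_Ioo_eq_restrict_Icc] at hderiv hzero
  refine hne (hLip.eq_of_ae_hasDerivAt_apply_zero ?_ hs₀ ht₀)
  filter_upwards [hderiv, hzero] with t ht ht0 i
  simpa [ht0] using ht i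

/-- A non-constant Lipschitz curve in the Kuratowski image of a complete separable
metric space has a weak* derivative that is not essentially separably valued. -/
theorem stmt15 {X : Type*} [MetricSpace X] [CompleteSpace X]
    (x : ℕ → X) (hx : DenseRange x)
    (κ : X → lp (fun _ : ℕ => ℝ) ∞)
    (hκ : ∀ (z : X) (i : ℕ), (κ z : ℕ → ℝ) i = dist z (x i) - dist (x i) (x 0))
    (a b : ℝ) (hab : a ≤ b) (K : NNReal)
    (γ : ℝ → lp (fun _ : ℕ => ℝ) ∞)
    (hrange : ∀ t ∈ Set.Icc a b, γ t ∈ Set.range κ)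
    (hLip : LipschitzOnWith K γ (Set.Icc a b))
    (hnonconst : ∃ s ∈ Set.Icc a b, ∃ t ∈ Set.Icc a b, γ s ≠ γ t)
    (γ' : ℝ → lp (fun _ : ℕ => ℝ) ∞)
    (hdiff : ∀ᵐ t ∂(volume.restrict (Set.Icc a b)), IsWeakStarDerivAt γ t (γ' t)) :
    ∀ N : Set ℝ, volume N = 0 →
      ¬ TopologicalSpace.IsSeparable (γ' '' (Set.Icc a b \ N)) :=
  stmt15_general x hx κ hκ a b K γ hrange hLip hnonconst γ' hdiff
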